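/- If f : A → E is algebraic of degree m and g : E → E' is algebraic of degree n, then the composition g ∘ f : A → E' is algebraic of degree at most mn. -/

import Mathlib

/-- The difference operator `(D_a f)(x) = f(x+a) − f(x)`. -/
def Dop {A E : Type*} [Add A] [Sub E] (a : A) (f : A → E) : A → E :=
  fun x => f (x + a) - f x

/-- `f` is algebraic of degree at most `n`: all `(n+1)`-fold iterated differences vanish. -/
def AlgBound {A E : Type*} [Add A] [Sub E] [Zero E] (f : A → E) (n : ℕ) : Prop :=
  ∀ l : List A, l.length = n + 1 → ∀ x, (l.foldr Dop f) x = 0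

/-- `f` is algebraic of degree exactly `n`. -/
def IsAlgDeg {A E : Type*} [Add A] [Sub E] [Zero E] (f : A → E) (n : ℕ) : Prop :=
  AlgBound f n ∧ ∀ m : ℕ, AlgBound f m → n ≤ m

/-!
For functions `k₁, …, kⱼ : A → E` with `deg kᵢ ≤ dᵢ ≤ m`, consider
`Ψ x = (D_{k₁ x} ⋯ D_{kⱼ x} g) 0`; the single slot `k₁ = f` gives `g ∘ f = Ψ + g 0`.
`Ψ` vanishes once `j > n`, and in general has degree at most `n m - Σ (m - dᵢ)`. Indeed,
translating the slots by `b` one at a time and using `D_{z+w} - D_z = D_w + D_z D_w`, `D_b Ψ`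
becomes a sum of configurations in which a slot `k` is replaced by `D_b k`, or is followed by an
extra slot `D_b k`, of degree `≤ dᵢ - 1`. Both moves raise `Σ (m - dᵢ)` by at least one, so
induction on the degree bound applies.
-/

section Difference

variable {A E : Type*} [Add A] [AddCommGroup E]

lemma foldr_Dop_add (l : List A) (F G : A → E) :
    l.foldr Dop (F + G) = l.foldr Dop F + l.foldr Dop G := by
  induction l with
  | nil => rfl
  | cons a l ih => funext x; simp only [List.foldr_cons, ih, Dop, Pi.add_apply]; abel

lemma foldr_Dop_neg (l : List A) (F : A → E) : l.foldr Dop (-F) = -l.foldr Dop F := by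
  induction l with
  | nil => rfl
  | cons a l ih => funext x; simp only [List.foldr_cons, ih, Dop, Pi.neg_apply]; abel

lemma foldr_Dop_zero (l : List A) : l.foldr Dop (0 : A → E) = 0 := by
  simpa using foldr_Dop_add l (0 : A → E) 0

lemma foldr_Dop_sub (l : List A) (F G : A → E) :
    l.foldr Dop (F - G) = l.foldr Dop F - l.foldr Dop G := by
  rw [sub_eq_add_neg, foldr_Dop_add, foldr_Dop_neg, ← sub_eq_add_neg]

variable (A E) in
/-- The functions of degree `< N`, so that `algLT A E 0 = ⊥` and
`F ∈ algLT A E (n + 1) ↔ AlgBound F n`. -/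
def algLT (N : ℕ) : AddSubgroup (A → E) where
  carrier := {F | ∀ l : List A, l.length = N → ∀ x, l.foldr Dop F x = 0}
  add_mem' {F G} hF hG l hl x := by simp [foldr_Dop_add, hF l hl x, hG l hl x]
  zero_mem' l _ x := by simp [foldr_Dop_zero]
  neg_mem' {F} hF l hl x := by simp [foldr_Dop_neg, hF l hl x]

lemma algLT_mono {N M : ℕ} (h : N ≤ M) : algLT A E N ≤ algLT A E M := by
  intro F hF l hl x
  have hdrop : (l.drop (M - N)).foldr Dop F = 0 := funext (hF _ (by simp; omega))
  rw [← List.take_append_drop (M - N) l, List.foldr_append, hdrop, foldr_Dop_zero]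
  rfl

lemma Dop_mem_algLT {F : A → E} {N : ℕ} (hF : F ∈ algLT A E (N + 1)) (b : A) :
    Dop b F ∈ algLT A E N := fun l hl x => by
  simpa [List.foldr_append] using hF (l ++ [b]) (by simp [hl]) x

lemma mem_algLT_succ_of_forall_Dop {F : A → E} {N : ℕ} (h : ∀ b, Dop b F ∈ algLT A E N) :
    F ∈ algLT A E (N + 1) := by
  intro l hl x
  obtain ⟨l, b, rfl⟩ := l.eq_nil_or_concat'.resolve_left (by rintro rfl; simp at hl)
  simpa [List.foldr_append] using h b l (by simpa using hl) x

lemma const_mem_algLT_succ (c : E) (N : ℕ) : (fun _ : A => c) ∈ algLT A E (N + 1) :=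
  mem_algLT_succ_of_forall_Dop fun b => by
    convert (algLT A E N).zero_mem
    funext x
    simp [Dop]

lemma apply_add_eq_of_algBound_zero {F : A → E} (hF : AlgBound F 0) (x b : A) :
    F (x + b) = F x :=
  sub_eq_zero.mp (hF [b] rfl x)

lemma foldr_Dop_comp_add_right {A : Type*} [AddCommSemigroup A] (l : List A) (F : A → E)
    (b : A) : l.foldr Dop (fun x => F (x + b)) = fun x => l.foldr Dop F (x + b) := by
  induction l with
  | nil => rfl
  | cons a l ih => funext x; simp only [List.foldr_cons, ih, Dop, add_right_comm]

lemma comp_add_right_mem_algLT {A : Type*} [AddCommSemigroup A] {F : A → E} {N : ℕ}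
    (hF : F ∈ algLT A E N) (b : A) : (fun x => F (x + b)) ∈ algLT A E N := fun l hl x => by
  rw [foldr_Dop_comp_add_right]
  exact hF l hl (x + b)

end Difference

lemma Dop_add_sub_Dop {E E' : Type*} [AddSemigroup E] [AddCommGroup E'] (F : E → E')
    (z w : E) : Dop (z + w) F - Dop z F = Dop w F + Dop z (Dop w F) := by
  funext y
  simp only [Dop, Pi.sub_apply, Pi.add_apply, add_assoc]
  abel

section Composition

variable {A E E' : Type*}

def slotCost (m : ℕ) (L : List ((A → E) × ℕ)) : ℕ :=
  (L.map fun p => m - p.2).sum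

lemma slotCost_le_length_mul (m : ℕ) (L : List ((A → E) × ℕ)) :
    slotCost m L ≤ L.length * m := by
  have hle : ∀ c ∈ L.map fun p => m - p.2, c ≤ m := by
    simp only [List.mem_map]
    rintro _ ⟨p, -, rfl⟩
    exact Nat.sub_le m p.2
  simpa [slotCost] using List.sum_le_card_nsmul _ m hle

@[simp]
lemma slotCost_cons (m : ℕ) (p : (A → E) × ℕ) (L : List ((A → E) × ℕ)) :
    slotCost m (p :: L) = (m - p.2) + slotCost m L := List.sum_cons

@[simp]
lemma slotCost_nil (m : ℕ) : slotCost m ([] : List ((A → E) × ℕ)) = 0 := rfl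

@[simp]
lemma slotCost_append (m : ℕ) (L L' : List ((A → E) × ℕ)) :
    slotCost m (L ++ L') = slotCost m L + slotCost m L' := by
  simp [slotCost]

def shiftSlot [Add A] (b : A) (p : (A → E) × ℕ) : (A → E) × ℕ :=
  (fun x => p.1 (x + b), p.2)

variable [AddCommGroup E] [AddCommGroup E']

def SlotsAlgBound [Add A] (m : ℕ) (L : List ((A → E) × ℕ)) : Prop :=
  ∀ p ∈ L, AlgBound p.1 p.2 ∧ p.2 ≤ m

/-- `(D_{k₁ x} ⋯ D_{kⱼ x} g) 0` for `L = [(k₁, d₁), …, (kⱼ, dⱼ)]`; the `dᵢ` are degree bounds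
for the `kᵢ`, carried along for the bookkeeping only. -/
def diffAlong (g : E → E') (L : List ((A → E) × ℕ)) (x : A) : E' :=
  (L.map fun p => p.1 x).foldr Dop g 0

lemma diffAlong_eq_zero_of_length {g : E → E'} {n : ℕ} (hg : AlgBound g n)
    {L : List ((A → E) × ℕ)} (hL : n < L.length) : diffAlong g L = 0 :=
  funext fun x => algLT_mono (by simpa using hL) hg _ (by simp) 0

lemma diffAlong_slot_add_sub (g : E → E') (P S : List ((A → E) × ℕ)) (k w : A → E)
    (d e e' : ℕ) :
    diffAlong g (P ++ (fun x => k x + w x, d) :: S) - diffAlong g (P ++ (k, d) :: S)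
      = diffAlong g (P ++ (w, e) :: S) + diffAlong g (P ++ (k, d) :: (w, e') :: S) := by
  funext x
  simp only [diffAlong, Pi.sub_apply, Pi.add_apply, List.map_append, List.map_cons,
    List.foldr_append, List.foldr_cons]
  rw [← Pi.sub_apply, ← foldr_Dop_sub, Dop_add_sub_Dop, foldr_Dop_add]
  rfl

variable [AddCommSemigroup A]

lemma diffAlong_shift_slot_sub_mem {g : E → E'} {m n N : ℕ}
    (ih : ∀ L : List ((A → E) × ℕ), SlotsAlgBound m L →
      n * m < N + slotCost m L → diffAlong g L ∈ algLT A E' N)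
    (b : A) (P S : List ((A → E) × ℕ)) (k : A → E) (d : ℕ)
    (hL : SlotsAlgBound m (P ++ (k, d) :: S))
    (hcost : n * m < N + 1 + slotCost m (P ++ (k, d) :: S)) :
    diffAlong g (P ++ shiftSlot b (k, d) :: S) - diffAlong g (P ++ (k, d) :: S)
      ∈ algLT A E' N := by
  have hk : AlgBound k d ∧ d ≤ m := hL (k, d) (by simp)
  cases d with
  | zero =>
    have hconst : shiftSlot b (k, 0) = (k, 0) := by
      simp [shiftSlot, apply_add_eq_of_algBound_zero hk.1]
    simp [hconst]
  | succ d =>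
    have hshift : shiftSlot b (k, d + 1) = (fun x => k x + Dop b k x, d + 1) := by
      simp [shiftSlot, Dop]
    rw [hshift, diffAlong_slot_add_sub g P S k (Dop b k) (d + 1) d d]
    have hvalid : ∀ p, p ∈ P ++ (k, d + 1) :: S ∨ p = (Dop b k, d) →
        AlgBound p.1 p.2 ∧ p.2 ≤ m
      | p, .inl hp => hL p hp
      | _, .inr rfl => ⟨Dop_mem_algLT hk.1 b, by omega⟩
    refine add_mem (ih _ ?_ ?_) (ih _ ?_ ?_)
    · exact fun p hp => hvalid p (by simp only [List.mem_append, List.mem_cons] at hp ⊢; tauto)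
    · simp only [slotCost_append, slotCost_cons] at hcost ⊢
      omega
    · exact fun p hp => hvalid p (by simp only [List.mem_append, List.mem_cons] at hp ⊢; tauto)
    · simp only [slotCost_append, slotCost_cons] at hcost ⊢
      omega

lemma diffAlong_shift_sub_mem {g : E → E'} {m n N : ℕ}
    (ih : ∀ L : List ((A → E) × ℕ), SlotsAlgBound m L →
      n * m < N + slotCost m L → diffAlong g L ∈ algLT A E' N)
    (b : A) (P S : List ((A → E) × ℕ)) (hL : SlotsAlgBound m (P ++ S))
    (hcost : n * m < N + 1 + slotCost m (P ++ S)) :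
    diffAlong g (P ++ S.map (shiftSlot b)) - diffAlong g (P ++ S)
      ∈ algLT A E' N := by
  induction S generalizing P with
  | nil => simp
  | cons p S ihS =>
    obtain ⟨k, d⟩ := p
    have hk : AlgBound k d ∧ d ≤ m := hL (k, d) (by simp)
    have hvalid : SlotsAlgBound m ((P ++ [shiftSlot b (k, d)]) ++ S) := by
      intro q hq
      simp only [List.append_assoc, List.singleton_append, List.mem_append, List.mem_cons] at hq
      rcases hq with hq | rfl | hq
      · exact hL q (by simp [hq])
      · exact ⟨comp_add_right_mem_algLT hk.1 b, hk.2⟩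
      · exact hL q (by simp [hq])
    have hsplit :
        diffAlong g (P ++ shiftSlot b (k, d) :: S.map (shiftSlot b))
          - diffAlong g (P ++ (k, d) :: S)
        = (diffAlong g ((P ++ [shiftSlot b (k, d)]) ++ S.map (shiftSlot b))
            - diffAlong g ((P ++ [shiftSlot b (k, d)]) ++ S))
          + (diffAlong g (P ++ shiftSlot b (k, d) :: S) - diffAlong g (P ++ (k, d) :: S)) := by
      simp only [List.append_assoc, List.singleton_append]
      abel
    rw [List.map_cons, hsplit]
    refine add_mem (ihS _ hvalid ?_) (diffAlong_shift_slot_sub_mem ih b P S k d hL hcost)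
    simpa [shiftSlot] using hcost

theorem diffAlong_mem_algLT {g : E → E'} {m n N : ℕ} (hg : AlgBound g n)
    {L : List ((A → E) × ℕ)} (hL : SlotsAlgBound m L)
    (hcost : n * m < N + slotCost m L) : diffAlong g L ∈ algLT A E' N := by
  induction N generalizing L with
  | zero =>
    have hlen : n < L.length := by
      have := slotCost_le_length_mul m L
      exact Nat.lt_of_mul_lt_mul_right (a := m) (by omega)
    rw [diffAlong_eq_zero_of_length hg hlen]
    exact zero_mem _
  | succ N ih =>
    refine mem_algLT_succ_of_forall_Dop fun b => ?_
    have hDop : Dop b (diffAlong g L)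
        = diffAlong g (L.map (shiftSlot b)) - diffAlong g L := by
      funext x; simp [Dop, diffAlong, shiftSlot, Function.comp_def]
    rw [hDop]
    simpa using diffAlong_shift_sub_mem (fun _ => ih) b [] L hL hcost

end Composition

/-- If `f : A → E` is algebraic of degree `m` and `g : E → E'` is algebraic of degree `n`,
then `g ∘ f` is algebraic of degree at most `m * n`. -/
theorem stmt6 {A E E' : Type*} [CommSemiring A] [CommRing E] [CommRing E']
    (f : A → E) (g : E → E') (m n : ℕ)
    (hf : IsAlgDeg f m) (hg : IsAlgDeg g n) :
    AlgBound (g ∘ f) (m * n) := by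
  have hψ : diffAlong g [(f, m)] ∈ algLT A E' (m * n + 1) :=
    diffAlong_mem_algLT (m := m) hg.1 (L := [(f, m)]) (by simpa [SlotsAlgBound] using hf.1)
      (by simp [mul_comm])
  have hgf : g ∘ f = diffAlong g [(f, m)] + fun _ => g 0 := by
    funext x; simp [diffAlong, Dop]
  show g ∘ f ∈ algLT A E' (m * n + 1)
  rw [hgf]
  exact add_mem hψ (const_mem_algLT_succ _ _)
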